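/- arXiv:1009.0853 — 5 statements merged into one kernel-verified Lean document; each statement's English description precedes it below -/
import Mathlib

section
/- Let E be a pseudo effect algebra satisfying (RDP). Then the set J(E) of Jordan signed measures on E, with pointwise addition and the pointwise order ≤⁺, is an Abelian Dedekind complete lattice-ordered group: it is an abelian lattice-ordered group in which every nonempty subset that is bounded above has a supremum. -/
/-!
Under (RDP) the supremum of two Jordan signed measures is given by
`(m ∨ m')(a) = sup {m b + m' c : b + c = a}`: the Riesz decomposition refines any decomposition
of `a₁ + a₂` into decompositions of `a₁` and `a₂`, which makes this function additive, and it
exceeds `m` by a measure, so it is again Jordan. For Dedekind completeness, the Jordan measures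
lying below every upper bound of `S` form an upward directed family containing `S`, and the
pointwise supremum of a bounded directed family of signed measures is additive.
-/

universe u v

/-- A pseudo effect algebra: a partial algebra `(E; +, 0, 1)` with a partially defined
binary operation (modelled as `E → E → Option E`) satisfying (i)-(iv). -/
structure PseudoEffectAlgebra (E : Type u) where
  add : E → E → Option E
  zero : E
  one : E
  /-- (i) `a+b` and `(a+b)+c` exist iff `b+c` and `a+(b+c)` exist, and then they are equal. -/
  assoc : ∀ a b c x : E,
    (∃ ab, add a b = some ab ∧ add ab c = some x) ↔
    (∃ bc, add b c = some bc ∧ add a bc = some x)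
  /-- (ii) there is exactly one `d` with `a + d = 1`. -/
  rinv : ∀ a : E, ∃! d, add a d = some one
  /-- (ii) there is exactly one `e` with `e + a = 1`. -/
  linv : ∀ a : E, ∃! e, add e a = some one
  /-- (iii) if `a+b` exists there are `d, e` with `a+b = d+a = b+e`. -/
  com_ex : ∀ a b ab : E, add a b = some ab →
    (∃ d, add d a = some ab) ∧ (∃ e, add b e = some ab)
  /-- (iv) if `1 + a` exists then `a = 0`. -/
  one_add : ∀ a x : E, add one a = some x → a = zero
  /-- (iv) if `a + 1` exists then `a = 0`. -/
  add_one : ∀ a x : E, add a one = some x → a = zero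

namespace PseudoEffectAlgebra

variable {E : Type u}

/-- `a ≤ b` iff `a + c = b` for some `c`. -/
def le (P : PseudoEffectAlgebra E) (a b : E) : Prop := ∃ c, P.add a c = some b

/-- The Riesz Decomposition Property (RDP). -/
def RDP (P : PseudoEffectAlgebra E) : Prop :=
  ∀ a₁ a₂ b₁ b₂ x : E, P.add a₁ a₂ = some x → P.add b₁ b₂ = some x →
    ∃ d₁ d₂ d₃ d₄, P.add d₁ d₂ = some a₁ ∧ P.add d₃ d₄ = some a₂ ∧
      P.add d₁ d₃ = some b₁ ∧ P.add d₂ d₄ = some b₂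

/-- A pseudo effect algebra with commutative `+` is an effect algebra. -/
def Commutative (P : PseudoEffectAlgebra E) : Prop := ∀ a b : E, P.add a b = P.add b a

/-- A signed measure: additive on existing sums. -/
def IsSignedMeasure (P : PseudoEffectAlgebra E) (m : E → ℝ) : Prop :=
  ∀ a b ab : E, P.add a b = some ab → m ab = m a + m b

/-- A measure: a nonnegative signed measure. -/
def IsMeasure (P : PseudoEffectAlgebra E) (m : E → ℝ) : Prop :=
  IsSignedMeasure P m ∧ ∀ a : E, 0 ≤ m a

/-- A state: a normalized measure. -/
def IsState (P : PseudoEffectAlgebra E) (s : E → ℝ) : Prop :=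
  IsMeasure P s ∧ s P.one = 1

/-- A Jordan signed measure: a difference of two measures. -/
def IsJordan (P : PseudoEffectAlgebra E) (m : E → ℝ) : Prop :=
  ∃ m₁ m₂ : E → ℝ, IsMeasure P m₁ ∧ IsMeasure P m₂ ∧ m = m₁ - m₂

/-- `J(E)`, the set of Jordan signed measures. -/
def Jordan (P : PseudoEffectAlgebra E) : Set (E → ℝ) := {m | IsJordan P m}

/-- `M⁺(E)`, the set of measures. -/
def Measures (P : PseudoEffectAlgebra E) : Set (E → ℝ) := {m | IsMeasure P m}

/-- `S(E)`, the set of states. -/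
def States (P : PseudoEffectAlgebra E) : Set (E → ℝ) := {s | IsState P s}

/-- `sup` is the least upper bound of `S` computed within the subset `J`
(with the pointwise order `≤⁺` on functions). -/
def IsLubIn (J S : Set (E → ℝ)) (sup : E → ℝ) : Prop :=
  sup ∈ J ∧ (∀ m ∈ S, m ≤ sup) ∧ ∀ b ∈ J, (∀ m ∈ S, m ≤ b) → sup ≤ b

/-- `inf` is the greatest lower bound of `S` computed within the subset `J`. -/
def IsGlbIn (J S : Set (E → ℝ)) (inf : E → ℝ) : Prop :=
  inf ∈ J ∧ (∀ m ∈ S, inf ≤ m) ∧ ∀ b ∈ J, (∀ m ∈ S, b ≤ m) → b ≤ inf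

/-- `SumList P [x₁, …, xₙ] x` means the sum `x₁ + ⋯ + xₙ` is defined in `E` and equals `x`. -/
inductive SumList (P : PseudoEffectAlgebra E) : List E → E → Prop
  | single (a : E) : SumList P [a] a
  | cons {l : List E} {b : E} (a ab : E) :
      SumList P l b → P.add a b = some ab → SumList P (a :: l) ab

/-- A face of a convex set `K`: a convex extreme subset. -/
def IsFace (K F : Set (E → ℝ)) : Prop := Convex ℝ F ∧ IsExtreme ℝ K F

/-- The complementary face `F'` of `F` in `K`: the union of all faces of `K` disjoint from `F`. -/
def ComplFace (K F : Set (E → ℝ)) : Set (E → ℝ) :=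
  ⋃₀ {G | IsFace K G ∧ Disjoint G F}

/-- The cone `V(F) = {α s : α ≥ 0, s ∈ F}` generated by a subset `F` of the state space. -/
def VCone (F : Set (E → ℝ)) : Set (E → ℝ) :=
  {m | ∃ α : ℝ, 0 ≤ α ∧ ∃ s ∈ F, m = α • s}

/-- `V(F)` is `∨`-closed: for every chain in `V(F)` bounded above in `M⁺(E)`,
the supremum taken in `J(E)` belongs to `V(F)`. -/
def VeeClosed (P : PseudoEffectAlgebra E) (F : Set (E → ℝ)) : Prop :=
  ∀ C : Set (E → ℝ), C ⊆ VCone F → C.Nonempty → IsChain (· ≤ ·) C →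
    (∃ b ∈ Measures P, ∀ m ∈ C, m ≤ b) →
    ∀ msup : E → ℝ, IsLubIn (Jordan P) C msup → msup ∈ VCone F

/-- `a` is the supremum of `S ⊆ E` in the partial order of `E`. -/
def IsLUBe (P : PseudoEffectAlgebra E) (S : Set E) (a : E) : Prop :=
  (∀ x ∈ S, P.le x a) ∧ ∀ b : E, (∀ x ∈ S, P.le x b) → P.le a b

/-- A σ-additive (signed) measure. -/
def SigmaAdditive (P : PseudoEffectAlgebra E) (m : E → ℝ) : Prop :=
  ∀ (a_ : ℕ → E) (a : E), (∀ n : ℕ, P.le (a_ n) (a_ (n + 1))) →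
    IsLUBe P (Set.range a_) a →
    Filter.Tendsto (fun n => m (a_ n)) Filter.atTop (nhds (m a))

/-- An upwards continuous (signed) measure: `{a_t} ↑ a` implies `{m(a_t)} ↑ m(a)`. -/
def UpwardsContinuous (P : PseudoEffectAlgebra E) (m : E → ℝ) : Prop :=
  ∀ {T : Type v} [Nonempty T] (a_ : T → E) (a : E),
    (∀ s t : T, ∃ r : T, P.le (a_ s) (a_ r) ∧ P.le (a_ t) (a_ r)) →
    IsLUBe P (Set.range a_) a →
    IsLUB (Set.range fun t => m (a_ t)) (m a)

/-- The system `{a_t}_{t ∈ T}` is summable with sum `a`: every finite subsystem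
(coded by a duplicate-free list) has a sum in `E`, and `a` is the supremum of
all such finite partial sums. -/
def IsSummableSum (P : PseudoEffectAlgebra E) {T : Type v} (a_ : T → E) (a : E) : Prop :=
  (∀ l : List T, l ≠ [] → l.Nodup → ∃ x : E, SumList P (l.map a_) x) ∧
  IsLUBe P {x : E | ∃ l : List T, l.Nodup ∧ SumList P (l.map a_) x} a

/-- A completely additive (signed) measure: whenever `a = Σ_{t∈T} a_t`, the value `m a`
is the supremum of the finite partial sums `Σ_{t∈F} m (a_t)`. -/
def CompletelyAdditive (P : PseudoEffectAlgebra E) (m : E → ℝ) : Prop :=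
  ∀ {T : Type v} (a_ : T → E) (a : E), IsSummableSum P a_ a →
    IsLUB {r : ℝ | ∃ l : List T, l.Nodup ∧ r = (l.map (fun t => m (a_ t))).sum} (m a)

/-- An ideal of a pseudo effect algebra. -/
def IsIdeal (P : PseudoEffectAlgebra E) (I : Set E) : Prop :=
  P.zero ∈ I ∧
  (∀ a ∈ I, ∀ b ∈ I, ∀ ab : E, P.add a b = some ab → ab ∈ I) ∧
  (∀ a b : E, b ∈ I → P.le a b → a ∈ I)

/-- A normal ideal: `a + I = I + a` for all `a`. -/
def IsNormalIdeal (P : PseudoEffectAlgebra E) (I : Set E) : Prop :=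
  IsIdeal P I ∧
  ∀ a : E, {x : E | ∃ b ∈ I, P.add a b = some x} = {x : E | ∃ b ∈ I, P.add b a = some x}

/-- `m₁ ≪_ε m₂`: `m₁` is `m₂`-continuous. -/
def EpsCont (m₁ m₂ : E → ℝ) : Prop :=
  ∀ ε : ℝ, 0 < ε → ∃ δ : ℝ, 0 < δ ∧ ∀ a : E, m₂ a < δ → m₁ a < ε

/-- `m₁ ≪ m₂`: `m₁` is absolutely continuous with respect to `m₂`. -/
def AbsCont (m₁ m₂ : E → ℝ) : Prop := ∀ a : E, m₂ a = 0 → m₁ a = 0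

/-- `a⁻ = 1 ⧵ a`, the unique element with `a⁻ + a = 1`. -/
noncomputable def lneg (P : PseudoEffectAlgebra E) (a : E) : E := (P.linv a).exists.choose

/-- `a` is central (Boolean): `a ∧ a⁻ = 0`. -/
def IsCentral (P : PseudoEffectAlgebra E) (a : E) : Prop :=
  ∀ x : E, P.le x a → P.le x (lneg P a) → x = P.zero

/-- `E` is monotone σ-complete. -/
def MonotoneSigmaComplete (P : PseudoEffectAlgebra E) : Prop :=
  ∀ a_ : ℕ → E, (∀ n : ℕ, P.le (a_ n) (a_ (n + 1))) → ∃ a : E, IsLUBe P (Set.range a_) a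

/-- `m ⊥ t`: there is `a ∈ E` with `t a = 0` and `m a⁻ = 0`. -/
def Perp (P : PseudoEffectAlgebra E) (m t : E → ℝ) : Prop :=
  ∃ a : E, t a = 0 ∧ m (lneg P a) = 0

/-- Unique decomposition of every measure `m` as `m = m₁ + m₂` with `m₁` a measure
satisfying `Q` and `m₂` a measure singular with respect to the measures satisfying `Q`. -/
def MeasDecomp (P : PseudoEffectAlgebra E) (Q : (E → ℝ) → Prop) : Prop :=
  ∀ m ∈ Measures P, ∃ m₁ m₂ : E → ℝ,
    (IsMeasure P m₁ ∧ Q m₁) ∧ IsMeasure P m₂ ∧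
    (∀ t : E → ℝ, IsMeasure P t → Q t → t ≤ m₂ → t = 0) ∧
    m = m₁ + m₂ ∧
    (∀ m₁' m₂' : E → ℝ, (IsMeasure P m₁' ∧ Q m₁') → IsMeasure P m₂' →
      (∀ t : E → ℝ, IsMeasure P t → Q t → t ≤ m₂' → t = 0) →
      m = m₁' + m₂' → m₁' = m₁ ∧ m₂' = m₂)

/-- Unique convex decomposition of every state `s` as `s = λ₁ s₁ + λ₂ s₂` with `s₁` a state
satisfying `Q` and `s₂` a state such that `α s' ≤⁺ s₂` with `s'` a state satisfying `Q`
and `α ≥ 0` forces `α = 0`. -/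
def StateDecomp (P : PseudoEffectAlgebra E) (Q : (E → ℝ) → Prop) : Prop :=
  ∀ s ∈ States P, ∃ l₁ l₂ : ℝ, 0 ≤ l₁ ∧ 0 ≤ l₂ ∧ l₁ + l₂ = 1 ∧
    ∃ s₁ s₂ : E → ℝ,
      (IsState P s₁ ∧ Q s₁) ∧ IsState P s₂ ∧
      (∀ (s' : E → ℝ) (α : ℝ), IsState P s' → Q s' → 0 ≤ α → α • s' ≤ s₂ → α = 0) ∧
      s = l₁ • s₁ + l₂ • s₂ ∧
      (∀ (μ₁ μ₂ : ℝ) (s₁' s₂' : E → ℝ), 0 ≤ μ₁ → 0 ≤ μ₂ → μ₁ + μ₂ = 1 →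
        (IsState P s₁' ∧ Q s₁') → IsState P s₂' →
        (∀ (s' : E → ℝ) (α : ℝ), IsState P s' → Q s' → 0 ≤ α → α • s' ≤ s₂' → α = 0) →
        s = μ₁ • s₁' + μ₂ • s₂' →
        μ₁ = l₁ ∧ μ₂ = l₂ ∧ (l₁ ≠ 0 → s₁' = s₁) ∧ (l₂ ≠ 0 → s₂' = s₂))

end PseudoEffectAlgebra

open PseudoEffectAlgebra

namespace PseudoEffectAlgebra

variable {E : Type u} (P : PseudoEffectAlgebra E)

lemma one_add_zero : P.add P.one P.zero = some P.one := by
  obtain ⟨d, hd, -⟩ := P.rinv P.one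
  rwa [P.one_add d P.one hd] at hd

lemma zero_add_one : P.add P.zero P.one = some P.one := by
  obtain ⟨e, he, -⟩ := P.linv P.one
  rwa [P.add_one e P.one he] at he

/-- If `e + a = 1`, then `e + (a + 0) = (e + a) + 0 = 1`, so `a + 0 = a` by uniqueness in (ii). -/
lemma add_zero_eq (a : E) : P.add a P.zero = some a := by
  obtain ⟨e, he, -⟩ := P.linv a
  obtain ⟨a₀, ha₀, he₀⟩ := (P.assoc e a P.zero P.one).mp ⟨P.one, he, P.one_add_zero⟩
  obtain ⟨_, -, huniq⟩ := P.rinv e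
  rwa [(huniq a₀ he₀).trans (huniq a he).symm] at ha₀

lemma zero_add_eq (a : E) : P.add P.zero a = some a := by
  obtain ⟨d, hd, -⟩ := P.rinv a
  obtain ⟨a₀, ha₀, hd₀⟩ := (P.assoc P.zero a d P.one).mpr ⟨P.one, hd, P.zero_add_one⟩
  obtain ⟨_, -, huniq⟩ := P.linv d
  rwa [(huniq a₀ hd₀).trans (huniq a hd).symm] at ha₀

variable {P}

lemma le_of_add_eq_left {b c a : E} (h : P.add b c = some a) : P.le b a := ⟨c, h⟩

lemma le_of_add_eq_right {b c a : E} (h : P.add b c = some a) : P.le c a :=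
  (P.com_ex b c a h).2

/-- `x = b₁ + c₁ + b₂ + c₂ = (b₁ + d) + (c₁ + c₂)`, where `c₁ + b₂ = d + c₁` by (iii). -/
lemma exists_add_eq_of_add_add {b₁ c₁ a₁ b₂ c₂ a₂ x : E}
    (h₁ : P.add b₁ c₁ = some a₁) (h₂ : P.add b₂ c₂ = some a₂) (hx : P.add a₁ a₂ = some x) :
    ∃ b c d v, P.add b c = some x ∧ P.add b₁ d = some b ∧ P.add c₁ c₂ = some c ∧
      P.add d c₁ = some v ∧ P.add c₁ b₂ = some v := by
  obtain ⟨u, hu₁, hu₂⟩ := (P.assoc b₁ c₁ a₂ x).mp ⟨a₁, h₁, hx⟩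
  obtain ⟨v, hv₁, hv₂⟩ := (P.assoc c₁ b₂ c₂ u).mpr ⟨a₂, h₂, hu₁⟩
  obtain ⟨⟨d, hd⟩, -⟩ := P.com_ex c₁ b₂ v hv₁
  obtain ⟨c, hc₁, hc₂⟩ := (P.assoc d c₁ c₂ u).mp ⟨v, hd, hv₂⟩
  obtain ⟨b, hb₁, hb₂⟩ := (P.assoc b₁ d c x).mpr ⟨u, hc₂, hu₂⟩
  exact ⟨b, c, d, v, hb₂, hb₁, hc₁, hd, hv₁⟩

lemma IsSignedMeasure.map_zero {m : E → ℝ} (hm : IsSignedMeasure P m) : m P.zero = 0 := by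
  linarith [hm P.zero P.zero P.zero (P.add_zero_eq P.zero)]

lemma IsSignedMeasure.sub {m m' : E → ℝ} (hm : IsSignedMeasure P m)
    (hm' : IsSignedMeasure P m') : IsSignedMeasure P (m - m') := by
  intro a b ab hab
  simp only [Pi.sub_apply, hm a b ab hab, hm' a b ab hab]
  ring

lemma IsMeasure.add {m m' : E → ℝ} (hm : IsMeasure P m) (hm' : IsMeasure P m') :
    IsMeasure P (m + m') := by
  refine ⟨fun a b ab hab => ?_, fun a => add_nonneg (hm.2 a) (hm'.2 a)⟩
  simp only [Pi.add_apply, hm.1 a b ab hab, hm'.1 a b ab hab]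
  ring

lemma IsMeasure.mono {m : E → ℝ} (hm : IsMeasure P m) {a b : E} (h : P.le a b) : m a ≤ m b := by
  obtain ⟨c, hc⟩ := h
  linarith [hm.1 a c b hc, hm.2 c]

lemma isMeasure_zero : IsMeasure P (0 : E → ℝ) :=
  ⟨fun _ _ _ _ => by simp, fun _ => le_rfl⟩

lemma isSignedMeasure_of_mem_jordan {m : E → ℝ} (h : m ∈ Jordan P) : IsSignedMeasure P m := by
  obtain ⟨m₁, m₂, h₁, h₂, rfl⟩ := h
  exact h₁.1.sub h₂.1

lemma mem_jordan_of_isMeasure {m : E → ℝ} (h : IsMeasure P m) : m ∈ Jordan P :=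
  ⟨m, 0, h, isMeasure_zero, (sub_zero m).symm⟩

lemma zero_mem_jordan : (0 : E → ℝ) ∈ Jordan P :=
  mem_jordan_of_isMeasure isMeasure_zero

lemma add_mem_jordan {m m' : E → ℝ} (h : m ∈ Jordan P) (h' : m' ∈ Jordan P) :
    m + m' ∈ Jordan P := by
  obtain ⟨m₁, m₂, hm₁, hm₂, rfl⟩ := h
  obtain ⟨k₁, k₂, hk₁, hk₂, rfl⟩ := h'
  exact ⟨m₁ + k₁, m₂ + k₂, hm₁.add hk₁, hm₂.add hk₂, by abel⟩

lemma neg_mem_jordan {m : E → ℝ} (h : m ∈ Jordan P) : -m ∈ Jordan P := by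
  obtain ⟨m₁, m₂, h₁, h₂, rfl⟩ := h
  exact ⟨m₂, m₁, h₂, h₁, neg_sub m₁ m₂⟩

lemma mem_jordan_of_le {m M : E → ℝ} (hm : m ∈ Jordan P) (hM : IsSignedMeasure P M)
    (hle : m ≤ M) : M ∈ Jordan P := by
  have hdiff : IsMeasure P (M - m) :=
    ⟨hM.sub (isSignedMeasure_of_mem_jordan hm), fun a => sub_nonneg.mpr (hle a)⟩
  simpa using add_mem_jordan (mem_jordan_of_isMeasure hdiff) hm

lemma IsSignedMeasure.iSup {ι : Type*} [Nonempty ι] {f : ι → E → ℝ}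
    (hf : ∀ i, IsSignedMeasure P (f i)) (hdir : Directed (· ≤ ·) f)
    (hbdd : ∀ a, BddAbove (Set.range fun i => f i a)) :
    IsSignedMeasure P (fun a => ⨆ i, f i a) := by
  intro a₁ a₂ x hx
  apply le_antisymm
  · refine ciSup_le fun i => ?_
    rw [hf i a₁ a₂ x hx]
    exact add_le_add (le_ciSup (hbdd a₁) i) (le_ciSup (hbdd a₂) i)
  · refine ciSup_add_ciSup_le fun i j => ?_
    obtain ⟨k, hik, hjk⟩ := hdir i j
    calc f i a₁ + f j a₂ ≤ f k a₁ + f k a₂ := add_le_add (hik a₁) (hjk a₂)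
      _ = f k x := (hf k a₁ a₂ x hx).symm
      _ ≤ ⨆ i, f i x := le_ciSup (hbdd x) k

abbrev Decomp (P : PseudoEffectAlgebra E) (a : E) : Type u := {p : E × E // P.add p.1 p.2 = some a}

instance (a : E) : Nonempty (Decomp P a) := ⟨⟨(a, P.zero), P.add_zero_eq a⟩⟩

noncomputable def jordanSup (P : PseudoEffectAlgebra E) (m m' : E → ℝ) (a : E) : ℝ :=
  ⨆ p : Decomp P a, m p.1.1 + m' p.1.2

lemma bddAbove_jordanSup {m m' : E → ℝ} (hm : m ∈ Jordan P) (hm' : m' ∈ Jordan P) (a : E) :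
    BddAbove (Set.range fun p : Decomp P a => m p.1.1 + m' p.1.2) := by
  obtain ⟨m₁, m₂, hm₁, hm₂, rfl⟩ := hm
  obtain ⟨k₁, k₂, hk₁, hk₂, rfl⟩ := hm'
  refine ⟨m₁ a + k₁ a, ?_⟩
  rintro _ ⟨⟨⟨b, c⟩, hbc⟩, rfl⟩
  have hb := hm₁.mono (le_of_add_eq_left hbc)
  have hc := hk₁.mono (le_of_add_eq_right hbc)
  simp only [Pi.sub_apply]
  linarith [hm₂.2 b, hk₂.2 c]

lemma le_jordanSup_left {m m' : E → ℝ} (hm : m ∈ Jordan P) (hm' : m' ∈ Jordan P) :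
    m ≤ jordanSup P m m' := fun a => by
  simpa [jordanSup, (isSignedMeasure_of_mem_jordan hm').map_zero] using
    le_ciSup (bddAbove_jordanSup hm hm' a) ⟨(a, P.zero), P.add_zero_eq a⟩

lemma le_jordanSup_right {m m' : E → ℝ} (hm : m ∈ Jordan P) (hm' : m' ∈ Jordan P) :
    m' ≤ jordanSup P m m' := fun a => by
  simpa [jordanSup, (isSignedMeasure_of_mem_jordan hm).map_zero] using
    le_ciSup (bddAbove_jordanSup hm hm' a) ⟨(P.zero, a), P.zero_add_eq a⟩

lemma jordanSup_le {m m' k : E → ℝ} (hk : IsSignedMeasure P k) (hm : m ≤ k) (hm' : m' ≤ k) :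
    jordanSup P m m' ≤ k := fun a =>
  ciSup_le fun ⟨⟨b, c⟩, hbc⟩ => by
    rw [hk b c a hbc]
    exact add_le_add (hm b) (hm' c)

/-- Subadditivity uses (RDP) to refine a decomposition of `a₁ + a₂` along `a₁, a₂`;
superadditivity uses `exists_add_eq_of_add_add` to merge decompositions of `a₁` and `a₂`. -/
lemma isSignedMeasure_jordanSup (hRDP : P.RDP) {m m' : E → ℝ} (hm : m ∈ Jordan P)
    (hm' : m' ∈ Jordan P) : IsSignedMeasure P (jordanSup P m m') := by
  have hsm := isSignedMeasure_of_mem_jordan hm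
  have hsm' := isSignedMeasure_of_mem_jordan hm'
  intro a₁ a₂ x hx
  apply le_antisymm
  · refine ciSup_le fun ⟨⟨b, c⟩, hbc⟩ => ?_
    obtain ⟨d₁, d₂, d₃, d₄, h₁₂, h₃₄, h₁₃, h₂₄⟩ := hRDP a₁ a₂ b c x hx hbc
    have t₁ := le_ciSup (bddAbove_jordanSup hm hm' a₁) ⟨(d₁, d₂), h₁₂⟩
    have t₂ := le_ciSup (bddAbove_jordanSup hm hm' a₂) ⟨(d₃, d₄), h₃₄⟩
    simp only [jordanSup, hsm d₁ d₃ b h₁₃, hsm' d₂ d₄ c h₂₄] at t₁ t₂ ⊢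
    linarith
  · refine ciSup_add_ciSup_le fun ⟨⟨b₁, c₁⟩, h₁⟩ ⟨⟨b₂, c₂⟩, h₂⟩ => ?_
    obtain ⟨b, c, d, v, hbc, hb, hc, hdv, hv⟩ := exists_add_eq_of_add_add h₁ h₂ hx
    have hd : m d = m b₂ := by linarith [hsm d c₁ v hdv, hsm c₁ b₂ v hv]
    have t := le_ciSup (bddAbove_jordanSup hm hm' x) ⟨(b, c), hbc⟩
    simp only [jordanSup, hsm b₁ d b hb, hsm' c₁ c₂ c hc, hd] at t ⊢
    linarith

lemma isLubIn_jordanSup (hRDP : P.RDP) {m m' : E → ℝ} (hm : m ∈ Jordan P)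
    (hm' : m' ∈ Jordan P) : IsLubIn (Jordan P) {m, m'} (jordanSup P m m') := by
  refine ⟨mem_jordan_of_le hm (isSignedMeasure_jordanSup hRDP hm hm') (le_jordanSup_left hm hm'),
    ?_, fun k hk hub => ?_⟩
  · rintro k (rfl | rfl)
    exacts [le_jordanSup_left hm hm', le_jordanSup_right hm hm']
  · exact jordanSup_le (isSignedMeasure_of_mem_jordan hk) (hub m (by simp)) (hub m' (by simp))

lemma exists_isLubIn_jordan (hRDP : P.RDP) {S : Set (E → ℝ)} (hS : S ⊆ Jordan P)
    (hne : S.Nonempty) (hbdd : ∃ b ∈ Jordan P, ∀ m ∈ S, m ≤ b) :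
    ∃ M, IsLubIn (Jordan P) S M := by
  obtain ⟨m₀, hm₀⟩ := hne
  obtain ⟨b₀, hb₀, hub₀⟩ := hbdd
  set D : Set (E → ℝ) := {k ∈ Jordan P | ∀ b ∈ Jordan P, (∀ m ∈ S, m ≤ b) → k ≤ b}
  have hSD : S ⊆ D := fun m hm => ⟨hS hm, fun b _ hub => hub m hm⟩
  have hdir : DirectedOn (· ≤ ·) D := fun k hk k' hk' =>
    ⟨jordanSup P k k', ⟨(isLubIn_jordanSup hRDP hk.1 hk'.1).1, fun b hb hub =>
        jordanSup_le (isSignedMeasure_of_mem_jordan hb) (hk.2 b hb hub) (hk'.2 b hb hub)⟩,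
      le_jordanSup_left hk.1 hk'.1, le_jordanSup_right hk.1 hk'.1⟩
  have : Nonempty D := ⟨⟨m₀, hSD hm₀⟩⟩
  have hbddD : ∀ a, BddAbove (Set.range fun k : D => k.1 a) := fun a =>
    ⟨b₀ a, by rintro _ ⟨k, rfl⟩; exact k.2.2 b₀ hb₀ hub₀ a⟩
  have hle : ∀ k ∈ D, k ≤ fun a => ⨆ k : D, k.1 a := fun k hk a =>
    le_ciSup (f := fun k : D => k.1 a) (hbddD a) ⟨k, hk⟩
  have hM : IsSignedMeasure P fun a => ⨆ k : D, k.1 a :=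
    IsSignedMeasure.iSup (fun k => isSignedMeasure_of_mem_jordan k.2.1) hdir.directed_val hbddD
  refine ⟨_, mem_jordan_of_le (hS hm₀) hM (hle m₀ (hSD hm₀)), fun m hm => hle m (hSD hm),
    fun b hb hub a => ciSup_le fun k => k.2.2 b hb hub a⟩

end PseudoEffectAlgebra

lemma isGlbIn_neg {E : Type u} {J : Set (E → ℝ)} (hJ : ∀ m ∈ J, -m ∈ J) {m m' M : E → ℝ}
    (h : IsLubIn J {-m, -m'} M) : IsGlbIn J {m, m'} (-M) := by
  obtain ⟨hMJ, hub, hlub⟩ := h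
  refine ⟨hJ M hMJ, ?_, fun b hb hlb => ?_⟩
  · rintro k (rfl | rfl)
    exacts [neg_le.mp (hub _ (by simp)), neg_le.mp (hub _ (by simp))]
  · refine le_neg.mp (hlub _ (hJ b hb) ?_)
    rintro k (rfl | rfl)
    exacts [neg_le_neg (hlb _ (by simp)), neg_le_neg (hlb _ (by simp))]

/-- For a pseudo effect algebra `E` with (RDP), the set `J(E)` of Jordan
signed measures, with pointwise addition and the pointwise order, is an Abelian Dedekind
complete lattice-ordered group: it contains `0`, is closed under addition and negation,
addition is commutative and order-compatible, any two elements have a supremum and an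
infimum in `J(E)`, and every nonempty subset of `J(E)` bounded above in `J(E)` has a
least upper bound in `J(E)`. -/
theorem stmt0 {E : Type u} (P : PseudoEffectAlgebra E) (hRDP : P.RDP) :
    (0 ∈ Jordan P) ∧
    (∀ m ∈ Jordan P, ∀ m' ∈ Jordan P, m + m' ∈ Jordan P) ∧
    (∀ m ∈ Jordan P, -m ∈ Jordan P) ∧
    (∀ m m' : E → ℝ, m + m' = m' + m) ∧
    (∀ m m' k : E → ℝ, m ≤ m' → m + k ≤ m' + k) ∧
    (∀ m ∈ Jordan P, ∀ m' ∈ Jordan P, ∃ msup : E → ℝ, IsLubIn (Jordan P) {m, m'} msup) ∧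
    (∀ m ∈ Jordan P, ∀ m' ∈ Jordan P, ∃ minf : E → ℝ, IsGlbIn (Jordan P) {m, m'} minf) ∧
    (∀ S : Set (E → ℝ), S ⊆ Jordan P → S.Nonempty →
      (∃ b ∈ Jordan P, ∀ m ∈ S, m ≤ b) →
      ∃ msup : E → ℝ, IsLubIn (Jordan P) S msup) :=
  ⟨zero_mem_jordan, fun _ hm _ hm' => add_mem_jordan hm hm', fun _ hm => neg_mem_jordan hm,
    add_comm, fun _ _ k h => add_le_add_left h k,
    fun _ hm _ hm' => ⟨_, isLubIn_jordanSup hRDP hm hm'⟩,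
    fun _ hm _ hm' => ⟨_, isGlbIn_neg (fun _ => neg_mem_jordan)
      (isLubIn_jordanSup hRDP (neg_mem_jordan hm) (neg_mem_jordan hm'))⟩,
    fun _ hS hne hbdd => exists_isLubIn_jordan hRDP hS hne hbdd⟩
end

section
/- Let E be a pseudo effect algebra satisfying (RDP) and let {m_i}_{i∈I} be a nonempty family of Jordan signed measures on E that is bounded above in J(E). Put d(x) = sup_i m_i(x) for x ∈ E. Then the supremum m = ⋁_i m_i taken in the lattice J(E) is given by m(x) = sup { d(x₁)+⋯+d(xₙ) : n ≥ 1, x = x₁+⋯+xₙ, x₁,…,xₙ ∈ E } for every x ∈ E. Dually, if the family is bounded below and e(x) = inf_i m_i(x), then (⋀_i m_i)(x) = inf { e(x₁)+⋯+e(xₙ) : x = x₁+⋯+xₙ, x₁,…,xₙ ∈ E } for every x ∈ E. -/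
universe u v

open PseudoEffectAlgebra

section AuxLemmas

variable {E : Type u} (P : PseudoEffectAlgebra E)

theorem my_jordan_signed {m : E → ℝ} (h : m ∈ Jordan P) : IsSignedMeasure P m := by
  obtain ⟨m₁, m₂, h₁, h₂, rfl⟩ := h
  intro a b ab hab
  simp only [Pi.sub_apply, h₁.1 a b ab hab, h₂.1 a b ab hab]
  ring

theorem my_jordan_neg {m : E → ℝ} (h : m ∈ Jordan P) : -m ∈ Jordan P := by
  obtain ⟨m₁, m₂, h₁, h₂, rfl⟩ := h
  exact ⟨m₂, m₁, h₂, h₁, by funext x; simp⟩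

theorem my_sumList_append :
    ∀ {la : List E} {a : E}, SumList P la a → ∀ {lb : List E} {b ab : E},
      SumList P lb b → P.add a b = some ab → SumList P (la ++ lb) ab := by
  intro la a ha
  induction ha with
  | single x =>
      intro lb b ab hb hab
      exact SumList.cons x ab hb hab
  | cons a1 a' hl h ih =>
      intro lb b ab hb hab
      obtain ⟨bc, hbc, habc⟩ := (P.assoc a1 _ b ab).mp ⟨a', h, hab⟩
      exact SumList.cons a1 ab (ih hb hbc) habc

theorem my_sumList_split (hRDP : P.RDP) :
    ∀ {l : List E} {x : E}, SumList P l x → ∀ {a b : E}, P.add a b = some x →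
    ∃ lp : List (E × E), SumList P (lp.map Prod.fst) a ∧ SumList P (lp.map Prod.snd) b ∧
      List.Forall₂ (fun p xj => P.add p.1 p.2 = some xj) lp l := by
  intro l x h
  induction h with
  | single y =>
      intro a b hab
      exact ⟨[(a, b)], SumList.single a, SumList.single b,
        List.Forall₂.cons hab List.Forall₂.nil⟩
  | cons x1 x' hl h ih =>
      intro a b hab
      obtain ⟨d1, d2, d3, d4, h12, h34, h13, h24⟩ := hRDP x1 _ a b x' h hab
      obtain ⟨lp, hfst, hsnd, hf2⟩ := ih h34
      exact ⟨(d1, d2) :: lp, SumList.cons d1 a hfst h13, SumList.cons d2 b hsnd h24,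
        List.Forall₂.cons h12 hf2⟩

theorem my_sum_eq {m : E → ℝ} (hm : IsSignedMeasure P m) :
    ∀ {l : List E} {x : E}, SumList P l x → m x = (l.map m).sum := by
  intro l x h
  induction h with
  | single a => simp
  | cons a ab hl h ih => simp [hm _ _ _ h, ih]

theorem my_forall2_sum_le {d : E → ℝ}
    (hd : ∀ u v x : E, P.add u v = some x → d x ≤ d u + d v) :
    ∀ {lp : List (E × E)} {l : List E},
      List.Forall₂ (fun p xj => P.add p.1 p.2 = some xj) lp l →
      (l.map d).sum ≤ ((lp.map Prod.fst).map d).sum + ((lp.map Prod.snd).map d).sum := by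
  intro lp l h
  induction h with
  | nil => simp
  | cons hpx _ ih =>
      simp only [List.map_cons, List.sum_cons]
      have := hd _ _ _ hpx
      linarith

theorem my_map_neg_sum (e : E → ℝ) : ∀ l : List E, (l.map (-e)).sum = -((l.map e).sum)
  | [] => by simp
  | a :: l => by
      simp only [List.map_cons, List.sum_cons, my_map_neg_sum e l, Pi.neg_apply]
      ring

theorem my_sup_formula (hRDP : P.RDP)
    {ι : Type v} [Nonempty ι] (m_ : ι → (E → ℝ)) (hm : ∀ i, m_ i ∈ Jordan P)
    (hb : ∃ b ∈ Jordan P, ∀ i, m_ i ≤ b)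
    (d : E → ℝ) (hd : ∀ x : E, d x = ⨆ i, m_ i x)
    (m : E → ℝ) (hlub : IsLubIn (Jordan P) (Set.range m_) m) :
    ∀ x : E, m x = sSup {r : ℝ | ∃ l : List E, SumList P l x ∧ r = (l.map d).sum} := by
  obtain ⟨mJ, hub, hmin⟩ := hlub
  have hmi_le : ∀ i, m_ i ≤ m := fun i => hub _ (Set.mem_range_self i)
  have hmsigned := my_jordan_signed P mJ
  have hmisigned : ∀ i, IsSignedMeasure P (m_ i) := fun i => my_jordan_signed P (hm i)
  have hbdd : ∀ x : E, BddAbove (Set.range fun i => m_ i x) :=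
    fun x => ⟨m x, by rintro r ⟨i, rfl⟩; exact hmi_le i x⟩
  have hmi_le_d : ∀ i x, m_ i x ≤ d x := fun i x => by
    rw [hd x]; exact le_ciSup (hbdd x) i
  have hd_le_m : ∀ x, d x ≤ m x := fun x => by
    rw [hd x]; exact ciSup_le fun i => hmi_le i x
  set S : E → Set ℝ :=
    fun x => {r : ℝ | ∃ l : List E, SumList P l x ∧ r = (l.map d).sum} with hS
  have hsum_le_m : ∀ {l : List E} {x : E}, SumList P l x → (l.map d).sum ≤ m x := by
    intro l x h
    calc (l.map d).sum ≤ (l.map m).sum := List.sum_le_sum fun i _ => hd_le_m i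
    _ = m x := (my_sum_eq P hmsigned h).symm
  have hne : ∀ x, (S x).Nonempty := fun x => ⟨d x, [x], SumList.single x, by simp⟩
  have hbddS : ∀ x, BddAbove (S x) :=
    fun x => ⟨m x, by rintro r ⟨l, hl, rfl⟩; exact hsum_le_m hl⟩
  set g : E → ℝ := fun x => sSup (S x) with hg
  have hg_le_m : ∀ x, g x ≤ m x := fun x =>
    csSup_le (hne x) (by rintro r ⟨l, hl, rfl⟩; exact hsum_le_m hl)
  have hd_le_g : ∀ x, d x ≤ g x :=
    fun x => le_csSup (hbddS x) ⟨[x], SumList.single x, by simp⟩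
  have hdsub : ∀ u v x : E, P.add u v = some x → d x ≤ d u + d v := by
    intro u v x huv
    rw [hd x]
    refine ciSup_le fun i => ?_
    rw [hmisigned i u v x huv]
    exact add_le_add (hmi_le_d i u) (hmi_le_d i v)
  have hgsigned : IsSignedMeasure P g := by
    intro a b ab hab
    apply le_antisymm
    · refine csSup_le (hne ab) ?_
      rintro r ⟨l, hl, rfl⟩
      obtain ⟨lp, hfst, hsnd, hf2⟩ := my_sumList_split P hRDP hl hab
      have h1 : ((lp.map Prod.fst).map d).sum ≤ g a :=
        le_csSup (hbddS a) ⟨lp.map Prod.fst, hfst, rfl⟩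
      have h2 : ((lp.map Prod.snd).map d).sum ≤ g b :=
        le_csSup (hbddS b) ⟨lp.map Prod.snd, hsnd, rfl⟩
      have h3 := my_forall2_sum_le P hdsub hf2
      linarith
    · have hkey : ∀ ra ∈ S a, ∀ rb ∈ S b, ra + rb ≤ g ab := by
        rintro ra ⟨la, hla, rfl⟩ rb ⟨lb, hlb, rfl⟩
        have hsl : SumList P (la ++ lb) ab := my_sumList_append P hla hlb hab
        exact le_csSup (hbddS ab) ⟨la ++ lb, hsl, by simp⟩
      have h1 : ∀ ra ∈ S a, ra ≤ g ab - g b := by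
        intro ra hra
        have h2 : g b ≤ g ab - ra :=
          csSup_le (hne b) fun rb hrb => by have := hkey ra hra rb hrb; linarith
        linarith
      have h4 := csSup_le (hne a) h1
      linarith
  have hmi_le_g : ∀ i, m_ i ≤ g := fun i x => le_trans (hmi_le_d i x) (hd_le_g x)
  have hgJ : g ∈ Jordan P := by
    obtain ⟨i0⟩ := ‹Nonempty ι›
    obtain ⟨p, q, hp, hq, hpqe⟩ := hm i0
    refine ⟨(g - m_ i0) + p, q, ⟨?_, ?_⟩, hq, ?_⟩
    · intro a b ab hab
      simp only [Pi.add_apply, Pi.sub_apply, hgsigned a b ab hab,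
        hmisigned i0 a b ab hab, hp.1 a b ab hab]
      ring
    · intro a
      have h1 : m_ i0 a ≤ g a := hmi_le_g i0 a
      have h2 := hp.2 a
      simp only [Pi.add_apply, Pi.sub_apply]
      linarith
    · funext x
      have h1 : m_ i0 x = p x - q x := by rw [hpqe]; simp
      simp only [Pi.sub_apply, Pi.add_apply]
      linarith
  have hmg : m ≤ g := hmin g hgJ (by rintro f ⟨i, rfl⟩; exact hmi_le_g i)
  intro x
  exact le_antisymm (hmg x) (hg_le_m x)

end AuxLemmas

/-- Formula for the supremum (and, dually, the infimum) of a nonempty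
bounded family of Jordan signed measures on a pseudo effect algebra with (RDP):
`(⋁ᵢ mᵢ)(x) = sup { d(x₁)+⋯+d(xₙ) : x = x₁+⋯+xₙ }` where `d(x) = supᵢ mᵢ(x)`. -/
theorem stmt1 {E : Type u} (P : PseudoEffectAlgebra E) (hRDP : P.RDP)
    {ι : Type v} [Nonempty ι] (m_ : ι → (E → ℝ)) (hm : ∀ i, m_ i ∈ Jordan P) :
    ((∃ b ∈ Jordan P, ∀ i, m_ i ≤ b) →
      ∀ d : E → ℝ, (∀ x : E, d x = ⨆ i, m_ i x) →
      ∀ m : E → ℝ, IsLubIn (Jordan P) (Set.range m_) m →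
      ∀ x : E, m x = sSup {r : ℝ | ∃ l : List E, SumList P l x ∧ r = (l.map d).sum}) ∧
    ((∃ b ∈ Jordan P, ∀ i, b ≤ m_ i) →
      ∀ e : E → ℝ, (∀ x : E, e x = ⨅ i, m_ i x) →
      ∀ m : E → ℝ, IsGlbIn (Jordan P) (Set.range m_) m →
      ∀ x : E, m x = sInf {r : ℝ | ∃ l : List E, SumList P l x ∧ r = (l.map e).sum}) := by
  constructor
  · intro hb d hd m hlub
    exact my_sup_formula P hRDP m_ hm hb d hd m hlub
  · intro hbl e he m hglb x
    set n_ : ι → E → ℝ := fun i => -(m_ i) with hn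
    have hnJ : ∀ i, n_ i ∈ Jordan P := fun i => my_jordan_neg P (hm i)
    obtain ⟨b, hbJ, hble⟩ := hbl
    have hb' : ∃ b' ∈ Jordan P, ∀ i, n_ i ≤ b' :=
      ⟨-b, my_jordan_neg P hbJ, fun i x => neg_le_neg (hble i x)⟩
    have hd' : ∀ x : E, (-e) x = ⨆ i, n_ i x := by
      intro x
      have hr : (Set.range fun i => n_ i x) = -(Set.range fun i => m_ i x) := by
        ext r
        simp only [Set.mem_neg, Set.mem_range, hn, Pi.neg_apply]
        constructor
        · rintro ⟨i, hi⟩; exact ⟨i, by linarith⟩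
        · rintro ⟨i, hi⟩; exact ⟨i, by linarith⟩
      show -(e x) = sSup (Set.range fun i => n_ i x)
      rw [he x]
      show -(sInf (Set.range fun i => m_ i x)) = _
      rw [Real.sInf_def, neg_neg, hr]
    obtain ⟨hmJ, hlb, hmax⟩ := hglb
    have hlub' : IsLubIn (Jordan P) (Set.range n_) (-m) := by
      refine ⟨my_jordan_neg P hmJ, ?_, ?_⟩
      · rintro f ⟨i, rfl⟩ y
        exact neg_le_neg (hlb (m_ i) (Set.mem_range_self i) y)
      · intro c hcJ hc
        have h1 : -c ≤ m := by
          refine hmax (-c) (my_jordan_neg P hcJ) ?_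
          rintro f ⟨i, rfl⟩ y
          have h2 := hc (n_ i) (Set.mem_range_self i) y
          simp only [hn, Pi.neg_apply] at h2 ⊢
          linarith
        intro y
        have := h1 y
        simp only [Pi.neg_apply] at this ⊢
        linarith
    have key := my_sup_formula P hRDP n_ hnJ hb' (-e) hd' (-m) hlub' x
    have hset : {r : ℝ | ∃ l : List E, SumList P l x ∧ r = (l.map (-e)).sum}
        = -{r : ℝ | ∃ l : List E, SumList P l x ∧ r = (l.map e).sum} := by
      ext r
      simp only [Set.mem_neg, Set.mem_setOf_eq]
      constructor
      · rintro ⟨l, hl, rfl⟩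
        exact ⟨l, hl, by rw [my_map_neg_sum]; ring⟩
      · rintro ⟨l, hl, hrr⟩
        exact ⟨l, hl, by rw [my_map_neg_sum]; linarith⟩
    rw [hset] at key
    simp only [Pi.neg_apply] at key
    rw [Real.sInf_def]
    linarith
end

section
/- Let m₁, …, mₙ be σ-additive measures on a pseudo effect algebra E satisfying (RDP). Then m = m₁ ∨ ⋯ ∨ mₙ, the supremum taken in the lattice-ordered group J(E), is also a σ-additive measure on E. -/
universe u v

open PseudoEffectAlgebra

/-- The supremum (taken in `J(E)`) of finitely many σ-additive measures
on a pseudo effect algebra with (RDP) is a σ-additive measure. -/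
theorem stmt8 {E : Type u} (P : PseudoEffectAlgebra E) (hRDP : P.RDP)
    (n : ℕ) (hn : 0 < n) (m_ : Fin n → (E → ℝ))
    (hm : ∀ i, IsMeasure P (m_ i) ∧ SigmaAdditive P (m_ i))
    (m : E → ℝ) (hsup : IsLubIn (Jordan P) (Set.range m_) m) :
    IsMeasure P m ∧ SigmaAdditive P m := by
  obtain ⟨hmJ, hub, hleast⟩ := hsup
  -- m is a signed measure since it is a difference of measures
  obtain ⟨μ₁, μ₂, hμ₁, hμ₂, hmdef⟩ := hmJ
  have hsigned : IsSignedMeasure P m := by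
    intro a b ab hab
    have h1 := hμ₁.1 a b ab hab
    have h2 := hμ₂.1 a b ab hab
    simp [hmdef, h1, h2]; ring
  -- m is nonnegative
  have hnonneg : ∀ x, 0 ≤ m x := fun x =>
    le_trans ((hm ⟨0, hn⟩).1.2 x) (hub (m_ ⟨0, hn⟩) ⟨⟨0, hn⟩, rfl⟩ x)
  have hMeas : IsMeasure P m := ⟨hsigned, hnonneg⟩
  refine ⟨hMeas, ?_⟩
  -- M := the sum of the m_i
  set M : E → ℝ := fun x => ∑ i, m_ i x with hMdef
  have hMmeas : IsMeasure P M := by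
    constructor
    · intro a b ab hab
      simp only [hMdef]
      rw [← Finset.sum_add_distrib]
      exact Finset.sum_congr rfl fun i _ => (hm i).1.1 a b ab hab
    · intro a
      exact Finset.sum_nonneg fun i _ => (hm i).1.2 a
  have hMJ : M ∈ Jordan P :=
    ⟨M, 0, hMmeas, ⟨fun a b ab _ => by simp, fun a => le_refl 0⟩, by simp⟩
  have hMub : ∀ m' ∈ Set.range m_, m' ≤ M := by
    rintro _ ⟨j, rfl⟩ x
    exact Finset.single_le_sum (fun i _ => (hm i).1.2 x) (Finset.mem_univ j)
  have hmleM : m ≤ M := hleast M hMJ hMub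
  -- σ-additivity
  intro a_ a hmono hlub
  -- for each k, pick c k with a_ k + c k = a
  have hle : ∀ k, P.le (a_ k) a := fun k => hlub.1 (a_ k) ⟨k, rfl⟩
  choose c hc using hle
  have hma : ∀ k, m (a_ k) = m a - m (c k) := by
    intro k
    have := hsigned (a_ k) (c k) a (hc k)
    linarith
  have hMa : ∀ k, M (a_ k) = M a - M (c k) := by
    intro k
    have := hMmeas.1 (a_ k) (c k) a (hc k)
    linarith
  -- M(a_k) → M(a) by σ-additivity of each m_i
  have hMtend : Filter.Tendsto (fun k => M (a_ k)) Filter.atTop (nhds (M a)) := by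
    simp only [hMdef]
    exact tendsto_finset_sum _ fun i _ => (hm i).2 a_ a hmono hlub
  -- hence M(c k) → 0
  have hMc : Filter.Tendsto (fun k => M (c k)) Filter.atTop (nhds 0) := by
    have : Filter.Tendsto (fun k => M a - M (a_ k)) Filter.atTop (nhds (M a - M a)) :=
      Filter.Tendsto.const_sub _ hMtend
    have h0 : (M a - M a : ℝ) = 0 := by ring
    rw [h0] at this
    exact this.congr fun k => by rw [hMa k]; ring
  -- squeeze: 0 ≤ m(c k) ≤ M(c k) → 0
  have hmc : Filter.Tendsto (fun k => m (c k)) Filter.atTop (nhds 0) :=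
    squeeze_zero (fun k => hnonneg (c k)) (fun k => hmleM (c k)) hMc
  have : Filter.Tendsto (fun k => m a - m (c k)) Filter.atTop (nhds (m a - 0)) :=
    Filter.Tendsto.const_sub _ hmc
  have h0 : m a - 0 = m a := by ring
  rw [h0] at this
  exact this.congr fun k => by rw [hma k]
end

section
/- Let E be a pseudo effect algebra satisfying (RDP). If {m_i} is a chain (totally ordered under ≤⁺) of measures in M⁺(E) that is bounded above in M⁺(E), then the supremum m₀ = ⋁_i m_i taken in the lattice-ordered group J(E) is computed pointwise: m₀(a) = sup_i m_i(a) for every a ∈ E. -/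
universe u v

open PseudoEffectAlgebra

/-- For a chain `C` of measures on a pseudo effect algebra with (RDP)
that is bounded above in `M⁺(E)`, the supremum `m₀ = ⋁ C` taken in `J(E)` is computed
pointwise: `m₀(a) = sup { m(a) : m ∈ C }` for every `a ∈ E`. -/
theorem stmt10 {E : Type u} (P : PseudoEffectAlgebra E) (hRDP : P.RDP)
    (C : Set (E → ℝ)) (hC : C ⊆ Measures P) (hne : C.Nonempty)
    (hchain : IsChain (· ≤ ·) C)
    (hbdd : ∃ b ∈ Measures P, ∀ m ∈ C, m ≤ b)
    (m₀ : E → ℝ) (hsup : IsLubIn (Jordan P) C m₀) :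
    ∀ a : E, IsLUB ((fun m : E → ℝ => m a) '' C) (m₀ a) := by
  obtain ⟨b, hbM, hb⟩ := hbdd
  set g : E → ℝ := fun a => sSup ((fun m : E → ℝ => m a) '' C) with hg
  have hne' : ∀ a : E, ((fun m : E → ℝ => m a) '' C).Nonempty := fun a => hne.image _
  have hbdd' : ∀ a : E, BddAbove ((fun m : E → ℝ => m a) '' C) := by
    intro a
    exact ⟨b a, by rintro _ ⟨m, hm, rfl⟩; exact hb m hm a⟩
  have hle : ∀ m ∈ C, ∀ a, m a ≤ g a := fun m hm a => le_csSup (hbdd' a) ⟨m, hm, rfl⟩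
  have hglub : ∀ a, IsLUB ((fun m : E → ℝ => m a) '' C) (g a) :=
    fun a => isLUB_csSup (hne' a) (hbdd' a)
  have hgmeas : IsMeasure P g := by
    constructor
    · intro a c ac hac
      have h1 : g ac ≤ g a + g c := by
        apply csSup_le (hne' ac)
        rintro _ ⟨m, hm, rfl⟩
        show m ac ≤ g a + g c
        rw [(hC hm).1 a c ac hac]
        exact add_le_add (hle m hm a) (hle m hm c)
      have h2 : g a + g c ≤ g ac := by
        refine le_of_forall_pos_le_add ?_
        intro ε hε
        obtain ⟨x, ⟨m1, hm1, rfl⟩, hx1⟩ :=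
          exists_lt_of_lt_csSup (hne' a) (show g a - ε / 2 < g a by linarith)
        obtain ⟨y, ⟨m2, hm2, rfl⟩, hx2⟩ :=
          exists_lt_of_lt_csSup (hne' c) (show g c - ε / 2 < g c by linarith)
        have key : ∀ m ∈ C, m1 ≤ m → m2 ≤ m → g a + g c ≤ g ac + ε := by
          intro m hm h1' h2'
          have hm' : m ac = m a + m c := (hC hm).1 a c ac hac
          have : m ac ≤ g ac := hle m hm ac
          have := h1' a
          have := h2' c
          linarith
        rcases eq_or_ne m1 m2 with rfl | hne12
        · exact key m1 hm1 le_rfl le_rfl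
        · rcases hchain hm1 hm2 hne12 with h | h
          · exact key m2 hm2 h le_rfl
          · exact key m1 hm1 le_rfl h
      linarith
    · intro a
      obtain ⟨m, hm⟩ := hne
      exact le_trans ((hC hm).2 a) (hle m hm a)
  have hzero : IsMeasure P (0 : E → ℝ) := by
    constructor
    · intro a c ac _; simp
    · intro a; simp
  have hgJ : g ∈ Jordan P := ⟨g, 0, hgmeas, hzero, (sub_zero g).symm⟩
  have hm0g : m₀ ≤ g := hsup.2.2 g hgJ (fun m hm a => hle m hm a)
  have hgm0 : ∀ a, g a ≤ m₀ a := by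
    intro a
    apply csSup_le (hne' a)
    rintro _ ⟨m, hm, rfl⟩
    exact hsup.2.1 m hm a
  intro a
  have : m₀ a = g a := le_antisymm (hm0g a) (hgm0 a)
  rw [this]
  exact hglub a
end

section
/- Let E be a pseudo effect algebra satisfying (RDP) and let t be a fixed measure on E. Then every measure m on E can be uniquely expressed as m = m₁ + m₂, where m₁ and m₂ are measures on E such that m₁ ≪ t (m₁ is absolutely continuous with respect to t) and every measure m′ with m′ ≪ t and m′ ≤⁺ m₂ is zero. -/
universe u v

open PseudoEffectAlgebra


namespace Stmt15Aux

variable {E : Type u}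

theorem zero_add' (P : PseudoEffectAlgebra E) (a : E) : P.add P.zero a = some a := by
  obtain ⟨d, hd, _⟩ := P.rinv a
  have h01 : P.add P.zero P.one = some P.one := by
    obtain ⟨e, he, _⟩ := P.linv P.one
    have := P.add_one e P.one he
    subst this; exact he
  obtain ⟨ab, h1, h2⟩ := (P.assoc P.zero a d P.one).mpr ⟨P.one, hd, h01⟩
  obtain ⟨e, he, hu⟩ := P.linv d
  have : ab = a := (hu ab h2).trans (hu a hd).symm
  rw [h1, this]

theorem add_zero' (P : PseudoEffectAlgebra E) (a : E) : P.add a P.zero = some a := by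
  obtain ⟨e, he, _⟩ := P.linv a
  have h10 : P.add P.one P.zero = some P.one := by
    obtain ⟨d, hd, _⟩ := P.rinv P.one
    have := P.one_add d P.one hd
    subst this; exact hd
  obtain ⟨bc, h1, h2⟩ := (P.assoc e a P.zero P.one).mp ⟨P.one, he, h10⟩
  obtain ⟨d, hd, hu⟩ := P.rinv e
  have : bc = a := (hu bc h2).trans (hu a he).symm
  rw [h1, this]

theorem le_refl' (P : PseudoEffectAlgebra E) (a : E) : P.le a a := ⟨P.zero, add_zero' P a⟩

theorem zero_le' (P : PseudoEffectAlgebra E) (a : E) : P.le P.zero a := ⟨a, zero_add' P a⟩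

theorem le_trans' (P : PseudoEffectAlgebra E) {a b c : E} (h1 : P.le a b) (h2 : P.le b c) :
    P.le a c := by
  obtain ⟨x, hx⟩ := h1
  obtain ⟨y, hy⟩ := h2
  obtain ⟨xy, hxy, hcomb⟩ := (P.assoc a x y c).mp ⟨b, hx, hy⟩
  exact ⟨xy, hcomb⟩

theorem meas_zero (P : PseudoEffectAlgebra E) {m : E → ℝ} (hm : IsMeasure P m) :
    m P.zero = 0 := by
  have := hm.1 P.zero P.zero P.zero (zero_add' P P.zero)
  linarith

theorem meas_mono (P : PseudoEffectAlgebra E) {m : E → ℝ} (hm : IsMeasure P m) {a b : E}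
    (h : P.le a b) : m a ≤ m b := by
  obtain ⟨c, hc⟩ := h
  have := hm.1 a c b hc
  have := hm.2 c
  linarith

/-- if `a + b = c`, `d₁ ≤ a`, `d₂ ≤ b`, then `d₁ + d₂` exists and is `≤ c`. -/
theorem add_le_of_le (P : PseudoEffectAlgebra E) {a b c d₁ d₂ : E}
    (hab : P.add a b = some c) (h1 : P.le d₁ a) (h2 : P.le d₂ b) :
    ∃ x, P.add d₁ d₂ = some x ∧ P.le x c := by
  obtain ⟨r, hr⟩ := h1
  obtain ⟨s, hs⟩ := h2
  obtain ⟨ad₂, had₂, hads⟩ := (P.assoc a d₂ s c).mpr ⟨b, hs, hab⟩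
  obtain ⟨rd₂, hrd₂, hd₁rd₂⟩ := (P.assoc d₁ r d₂ ad₂).mp ⟨a, hr, had₂⟩
  obtain ⟨_, e, he⟩ := P.com_ex r d₂ rd₂ hrd₂
  obtain ⟨x, hx, hxe⟩ := (P.assoc d₁ d₂ e ad₂).mpr ⟨rd₂, he, hd₁rd₂⟩
  exact ⟨x, hx, le_trans' P ⟨e, hxe⟩ ⟨s, hads⟩⟩

/-- The defining set of the singular part. -/
def SingSet (P : PseudoEffectAlgebra E) (t m : E → ℝ) (a : E) : Set ℝ :=
  {r : ℝ | ∃ b, P.le b a ∧ t b = 0 ∧ r = m b}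

/-- The singular part `m₂ a = sup {m b : b ≤ a, t b = 0}`. -/
noncomputable def sing (P : PseudoEffectAlgebra E) (t m : E → ℝ) (a : E) : ℝ :=
  sSup (SingSet P t m a)

variable (P : PseudoEffectAlgebra E) {t m : E → ℝ}

theorem singset_nonempty (ht : IsMeasure P t) (hm : IsMeasure P m) (a : E) :
    (SingSet P t m a).Nonempty :=
  ⟨m P.zero, P.zero, zero_le' P a, meas_zero P ht, rfl⟩

theorem singset_bdd (hm : IsMeasure P m) (a : E) : BddAbove (SingSet P t m a) := by
  refine ⟨m a, fun r hr => ?_⟩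
  obtain ⟨b, hb, _, rfl⟩ := hr
  exact meas_mono P hm hb

theorem le_sing (hm : IsMeasure P m) {a b : E} (hb : P.le b a) (htb : t b = 0) :
    m b ≤ sing P t m a :=
  le_csSup (singset_bdd P hm a) ⟨b, hb, htb, rfl⟩

theorem sing_le (ht : IsMeasure P t) (hm : IsMeasure P m) (a : E) :
    sing P t m a ≤ m a :=
  csSup_le (singset_nonempty P ht hm a) (fun r hr => by
    obtain ⟨b, hb, _, rfl⟩ := hr; exact meas_mono P hm hb)

theorem sing_nonneg (ht : IsMeasure P t) (hm : IsMeasure P m) (a : E) :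
    0 ≤ sing P t m a := by
  have := le_sing P hm (zero_le' P a) (meas_zero P ht)
  rw [meas_zero P hm] at this
  exact this

theorem sing_of_null (ht : IsMeasure P t) (hm : IsMeasure P m) {a : E} (ha : t a = 0) :
    sing P t m a = m a :=
  le_antisymm (sing_le P ht hm a) (le_sing P hm (le_refl' P a) ha)

theorem sing_add (hRDP : P.RDP) (ht : IsMeasure P t) (hm : IsMeasure P m)
    {a b c : E} (hab : P.add a b = some c) :
    sing P t m c = sing P t m a + sing P t m b := by
  refine le_antisymm ?_ ?_
  · refine csSup_le (singset_nonempty P ht hm c) (fun r hr => ?_)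
    obtain ⟨d, hd, htd, rfl⟩ := hr
    obtain ⟨eD, heD⟩ := hd
    obtain ⟨d₁, d₂, d₃, d₄, h12, h34, h13, h24⟩ := hRDP d eD a b c heD hab
    have hmd : m d = m d₁ + m d₂ := hm.1 d₁ d₂ d h12
    have htd' : t d = t d₁ + t d₂ := ht.1 d₁ d₂ d h12
    have ht1 : t d₁ = 0 := by have := ht.2 d₁; have := ht.2 d₂; linarith
    have ht2 : t d₂ = 0 := by have := ht.2 d₁; have := ht.2 d₂; linarith
    have h1 := le_sing P hm (a := a) ⟨d₃, h13⟩ ht1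
    have h2 := le_sing P hm (a := b) ⟨d₄, h24⟩ ht2
    linarith
  · have key : sing P t m a ≤ sing P t m c - sing P t m b := by
      refine csSup_le (singset_nonempty P ht hm a) (fun r hr => ?_)
      obtain ⟨d₁, hd₁, ht₁, rfl⟩ := hr
      have inner : sing P t m b ≤ sing P t m c - m d₁ := by
        refine csSup_le (singset_nonempty P ht hm b) (fun r' hr' => ?_)
        obtain ⟨d₂, hd₂, ht₂, rfl⟩ := hr'
        obtain ⟨x, hx, hxc⟩ := add_le_of_le P hab hd₁ hd₂
        have htx : t x = 0 := by have := ht.1 d₁ d₂ x hx; linarith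
        have hmx : m x = m d₁ + m d₂ := hm.1 d₁ d₂ x hx
        have := le_sing P hm hxc htx
        linarith
      linarith
    linarith

end Stmt15Aux

open Stmt15Aux

/-- **Lebesgue decomposition, `≪` version.** Let `t` be a fixed measure on
a pseudo effect algebra with (RDP). Every measure `m` decomposes uniquely as `m = m₁ + m₂`
where `m₁ ≪ t` and every measure `m' ≪ t` with `m' ≤⁺ m₂` is zero. -/
theorem stmt15 {E : Type u} (P : PseudoEffectAlgebra E) (hRDP : P.RDP)
    (t : E → ℝ) (ht : IsMeasure P t) :
    MeasDecomp P (fun m => AbsCont m t) := by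
  intro m hm
  have hm' : IsMeasure P m := hm
  refine ⟨fun a => m a - sing P t m a, sing P t m, ⟨⟨?_, ?_⟩, ?_⟩, ⟨?_, ?_⟩, ?_, ?_, ?_⟩
  · -- m₁ signed measure
    intro a b ab hab
    have h1 := hm'.1 a b ab hab
    have h2 := sing_add P hRDP ht hm' hab
    dsimp only
    linarith
  · -- m₁ nonneg
    intro a
    have := sing_le P ht hm' a
    dsimp only
    linarith
  · -- m₁ ≪ t
    intro a ha
    have := sing_of_null P ht hm' (a := a) ha
    dsimp only
    linarith
  · -- m₂ signed measure
    intro a b ab hab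
    exact sing_add P hRDP ht hm' hab
  · -- m₂ nonneg
    exact sing_nonneg P ht hm'
  · -- singularity of m₂
    intro m' hmeas' habs hle
    funext a
    show m' a = 0
    have key : sing P t m a ≤ sing P t m a - m' a := by
      refine csSup_le (singset_nonempty P ht hm' a) (fun r hr => ?_)
      obtain ⟨b, hb, htb, rfl⟩ := hr
      obtain ⟨c, hc⟩ := hb
      have h1 : m' a = m' b + m' c := hmeas'.1 b c a hc
      have h2 : m' b = 0 := habs b htb
      have h3 : sing P t m a = sing P t m b + sing P t m c :=
        sing_add P hRDP ht hm' hc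
      have h4 : sing P t m b = m b := sing_of_null P ht hm' htb
      have h5 : m' c ≤ sing P t m c := hle c
      linarith
    have := hmeas'.2 a
    linarith
  · -- m = m₁ + m₂
    funext a
    show m a = (m a - sing P t m a) + sing P t m a
    ring
  · -- uniqueness
    intro m₁' m₂' h1' h2' hsing' heq
    obtain ⟨hm₁', habs₁'⟩ := h1'
    have hle : ∀ a, sing P t m a ≤ m₂' a := by
      intro a
      refine csSup_le (singset_nonempty P ht hm' a) (fun r hr => ?_)
      obtain ⟨b, hb, htb, rfl⟩ := hr
      have hb' : m b = m₁' b + m₂' b := congrFun heq b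
      have h0 : m₁' b = 0 := habs₁' b htb
      have := meas_mono P h2' hb
      linarith
    have hgmeas : IsMeasure P (fun a => m₂' a - sing P t m a) := by
      constructor
      · intro a b ab hab
        have h1 := h2'.1 a b ab hab
        have h2 := sing_add P hRDP ht hm' hab
        dsimp only
        linarith
      · intro a
        have := hle a
        dsimp only
        linarith
    have hgabs : AbsCont (fun a => m₂' a - sing P t m a) t := by
      intro a ha
      have h1 : sing P t m a = m a := sing_of_null P ht hm' ha
      have h2 : m a = m₁' a + m₂' a := congrFun heq a
      have h3 : m₁' a = 0 := habs₁' a ha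
      dsimp only
      linarith
    have hgle : (fun a => m₂' a - sing P t m a) ≤ m₂' := by
      intro a
      have := sing_nonneg P ht hm' a
      dsimp only
      linarith
    have hg0 := hsing' _ hgmeas hgabs hgle
    have hm₂eq : m₂' = sing P t m := by
      funext a
      have := congrFun hg0 a
      simp only [Pi.zero_apply] at this
      linarith
    constructor
    · funext a
      have h2 : m a = m₁' a + m₂' a := congrFun heq a
      have h3 := congrFun hm₂eq a
      show m₁' a = m a - sing P t m a
      linarith
    · exact hm₂eq
end
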